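/- Let σ_e, σ_d, σ_W > 0, μ_e, μ_d ∈ ℝ, δ = μ_e − μ_d, P̄ > 0. Define A = √(P̄/(δ² + σ_e²)), C = −Aμ_d, K = Aσ_d²/(A²σ_d² + σ_W²), L = μ_d, and ν = K/A − K². Then: (i) ν > 0; (ii) A = K/(K² + ν); (iii) C = −KL/(K² + ν); (iv) L = (σ_W²μ_d − ACσ_d²)/(A²σ_d² + σ_W²); and (v) A²(δ² + σ_e²) = P̄, i.e., the expectation of (Am + C)² under gaussianReal μ_e σ_e² equals P̄. -/

import Mathlib

open MeasureTheory ProbabilityTheory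
open scoped NNReal

/-!
The encoder gain `A` is chosen to meet the power constraint with equality, and the decoder's
gain `K` is the linear MMSE estimator gain for the channel `y = A m + C + w` under the decoder's
prior. The multiplier `ν = K / A - K²` then simplifies to `σd² σW² / (A² σd² + σW²)² > 0`, and
`K² + ν = K / A` turns the encoder's stationarity conditions into identities. The power
constraint reads `E[(A m + C)²] = A² σe² + (A μe + C)² = A² (δ² + σe²)`, since the push-forward
of a Gaussian under an affine map is again Gaussian.
-/

lemma integral_sq_gaussianReal (μ : ℝ) (v : ℝ≥0) :
    ∫ x, x ^ 2 ∂gaussianReal μ v = v + μ ^ 2 := by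
  have h := variance_eq_sub (memLp_id_gaussianReal' (μ := μ) (v := v) 2 (by norm_num))
  simp only [variance_id_gaussianReal, Pi.pow_apply, id_eq, integral_id_gaussianReal] at h
  linarith

lemma gaussianReal_map_affine (μ : ℝ) (v : ℝ≥0) (a c : ℝ) :
    (gaussianReal μ v).map (fun x ↦ a * x + c)
      = gaussianReal (a * μ + c) (.mk (a ^ 2) (sq_nonneg a) * v) := by
  rw [← gaussianReal_map_add_const, ← gaussianReal_map_const_mul,
    Measure.map_map (by fun_prop) (by fun_prop)]
  rfl

lemma integral_affine_sq_gaussianReal (μ : ℝ) (v : ℝ≥0) (a c : ℝ) :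
    ∫ x, (a * x + c) ^ 2 ∂gaussianReal μ v = a ^ 2 * v + (a * μ + c) ^ 2 := by
  rw [← integral_map (f := fun y ↦ y ^ 2) (by fun_prop) (by fun_prop),
    gaussianReal_map_affine, integral_sq_gaussianReal]
  simp

lemma div_sub_sq_of_eq_mul_div {A s w K : ℝ} (hA : A ≠ 0) (hden : A ^ 2 * s + w ≠ 0)
    (hK : K = A * s / (A ^ 2 * s + w)) :
    K / A - K ^ 2 = s * w / (A ^ 2 * s + w) ^ 2 := by
  subst hK
  field_simp
  ring

theorem stmt13 (σe σd σW μe μd Pbar : ℝ)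
    (hσe : 0 < σe) (hσd : 0 < σd) (hσW : 0 < σW) (hP : 0 < Pbar) :
    let δ : ℝ := μe - μd
    let A : ℝ := Real.sqrt (Pbar / (δ ^ 2 + σe ^ 2))
    let C : ℝ := -A * μd
    let K : ℝ := A * σd ^ 2 / (A ^ 2 * σd ^ 2 + σW ^ 2)
    let L : ℝ := μd
    let ν : ℝ := K / A - K ^ 2
    (0 < ν)
    ∧ A = K / (K ^ 2 + ν)
    ∧ C = -(K * L) / (K ^ 2 + ν)
    ∧ L = (σW ^ 2 * μd - A * C * σd ^ 2) / (A ^ 2 * σd ^ 2 + σW ^ 2)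
    ∧ A ^ 2 * (δ ^ 2 + σe ^ 2) = Pbar
    ∧ ∫ m, (A * m + C) ^ 2 ∂(gaussianReal μe ⟨σe ^ 2, sq_nonneg σe⟩) = Pbar := by
  intro δ A C K L ν
  have hA : 0 < A := Real.sqrt_pos.mpr (by positivity)
  have hden : 0 < A ^ 2 * σd ^ 2 + σW ^ 2 := by positivity
  have hK : K ≠ 0 := by positivity
  have hν : ν = σd ^ 2 * σW ^ 2 / (A ^ 2 * σd ^ 2 + σW ^ 2) ^ 2 :=
    div_sub_sq_of_eq_mul_div hA.ne' hden.ne' rfl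
  have hKν : K ^ 2 + ν = K / A := add_sub_cancel _ _
  have hpower : A ^ 2 * (δ ^ 2 + σe ^ 2) = Pbar := by
    rw [Real.sq_sqrt (by positivity), div_mul_cancel₀ _ (by positivity)]
  refine ⟨by rw [hν]; positivity, by rw [hKν, div_div_cancel₀ hK], ?_, ?_, hpower, ?_⟩
  · rw [hKν]
    field_simp
    simp only [C, L]
    ring
  · field_simp
    ring
  · erw [integral_affine_sq_gaussianReal, NNReal.coe_mk]
    linear_combination hpower
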